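/- arXiv:1402.5477 — 2 statements merged into one kernel-verified Lean document; each statement's English description precedes it below -/
import Mathlib

section
/- Let n ≥ 2 be a natural number, let 0 < r ≤ 1, and let X_1, …, X_n be independent random points, each uniformly distributed on the unit square [0,1]². For any subset A of {1,…,n} with 1 ≤ |A| ≤ n/2, let N be the number of ordered pairs (i,j) with i ∈ A, j ∉ A, and ‖X_i − X_j‖ ≤ r. Then (1/8) |A| n π r² ≤ E[N] ≤ |A| n π r². -/
/-!
By linearity and pairwise independence, `E[N] = |A| |Aᶜ| p`, where `p = P(‖X - Y‖ ≤ r)` for two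
independent uniform points of the square; since `|A| ≤ n / 2`, we have `n / 2 ≤ |Aᶜ| ≤ n`.
By Fubini, `p` is the average over `x` in the square of the area of `B(x, r) ∩ [0,1]²`. This is at
most `π r²`. It is at least `π r² / 4` when `r ≤ 1`: above each abscissa `t ∈ [0,1]` the disc has
a vertical chord of half-length `g(t) = √(r² - (t - x₀)²) ≤ 1`, a segment of length `g(t)` of
which lies in `[0,1]`, and `∫₀¹ g ≥ ∫₀¹ √(r² - t²) = π r² / 4` because `g` is the same even,
unimodal profile recentred at a point of `[0,1]`.
-/

open MeasureTheory Real Set intervalIntegral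

theorem integral_neg_zero_eq_of_even {h : ℝ → ℝ} (heven : ∀ t, h (-t) = h t) (c : ℝ) :
    ∫ t in -c..0, h t = ∫ t in 0..c, h t := by
  simpa [heven] using (integral_comp_neg (a := 0) (b := c) h).symm

theorem integral_le_integral_comp_sub_of_even_of_antitoneOn {h : ℝ → ℝ} (hcont : Continuous h)
    (heven : ∀ t, h (-t) = h t) (hanti : AntitoneOn h (Ici 0)) {L c : ℝ} (hc : 0 ≤ c)
    (hcL : c ≤ L) :
    ∫ t in 0..L, h t ≤ ∫ t in 0..L, h (t - c) := by
  have hint (a b : ℝ) : IntervalIntegrable h volume a b := hcont.intervalIntegrable a b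
  have htail : ∫ t in L - c..L, h t ≤ ∫ t in 0..c, h t := by
    have hshift := integral_comp_add_right (a := 0) (b := c) h (L - c)
    rw [zero_add, add_sub_cancel] at hshift
    rw [← hshift]
    refine integral_mono_on hc
      ((by fun_prop : Continuous fun t => h (t + (L - c))).intervalIntegrable _ _) (hint 0 c)
      fun t ht => hanti ht.1 (by simp; linarith [ht.1]) (by linarith)
  have hsplit := integral_add_adjacent_intervals (hint (-c) 0) (hint 0 (L - c))
  have hsplit' := integral_add_adjacent_intervals (hint 0 (L - c)) (hint (L - c) L)
  rw [integral_comp_sub_right, zero_sub, ← hsplit, ← hsplit', integral_neg_zero_eq_of_even heven]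
  linarith

theorem integral_sqrt_one_sub_sq_zero_one : ∫ u in 0..1, √(1 - u ^ 2) = π / 4 := by
  have hint (a b : ℝ) : IntervalIntegrable (fun u : ℝ => √(1 - u ^ 2)) volume a b :=
    (by fun_prop : Continuous fun u : ℝ => √(1 - u ^ 2)).intervalIntegrable a b
  have := integral_sqrt_one_sub_sq
  rw [← integral_add_adjacent_intervals (hint (-1) 0) (hint 0 1),
    integral_neg_zero_eq_of_even (by simp)] at this
  linarith

theorem integral_sqrt_sq_sub_sq {r : ℝ} (hr : 0 ≤ r) :
    ∫ t in 0..r, √(r ^ 2 - t ^ 2) = π * r ^ 2 / 4 := by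
  have hscale (u : ℝ) : √(r ^ 2 - (r * u) ^ 2) = r * √(1 - u ^ 2) := by
    rw [show r ^ 2 - (r * u) ^ 2 = r ^ 2 * (1 - u ^ 2) by ring, sqrt_mul (sq_nonneg r),
      sqrt_sq hr]
  have := smul_integral_comp_mul_left (a := 0) (b := 1) (fun t => √(r ^ 2 - t ^ 2)) r
  simp only [mul_zero, mul_one, smul_eq_mul, hscale, intervalIntegral.integral_const_mul,
    integral_sqrt_one_sub_sq_zero_one] at this
  rw [← this]
  ring

theorem pi_mul_sq_div_four_le_integral_sqrt {r L c : ℝ} (hr : 0 ≤ r) (hrL : r ≤ L) (hc : 0 ≤ c)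
    (hcL : c ≤ L) :
    π * r ^ 2 / 4 ≤ ∫ t in 0..L, √(r ^ 2 - (t - c) ^ 2) := by
  have hcont : Continuous fun t : ℝ => √(r ^ 2 - t ^ 2) := by fun_prop
  have hvanish : ∫ t in r..L, √(r ^ 2 - t ^ 2) = 0 := by
    rw [← integral_zero (a := r) (b := L) (μ := volume) (E := ℝ)]
    refine integral_congr fun t ht => sqrt_eq_zero_of_nonpos ?_
    rw [uIcc_of_le hrL] at ht
    nlinarith [ht.1]
  have hanti : AntitoneOn (fun t : ℝ => √(r ^ 2 - t ^ 2)) (Ici 0) := fun a ha b _ hab =>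
    sqrt_le_sqrt (by nlinarith [mem_Ici.1 ha])
  calc π * r ^ 2 / 4 = ∫ t in 0..L, √(r ^ 2 - t ^ 2) := by
        rw [← integral_add_adjacent_intervals (hcont.intervalIntegrable 0 r)
          (hcont.intervalIntegrable r L), hvanish, add_zero, integral_sqrt_sq_sub_sq hr]
    _ ≤ _ := integral_le_integral_comp_sub_of_even_of_antitoneOn hcont (by simp) hanti hc hcL

theorem Ioo_max_sub_zero_subset {b g : ℝ} (hb : b ∈ Icc (0 : ℝ) 1) (hg : g ≤ 1) :
    Ioo (max (b - g) 0) (max (b - g) 0 + g) ⊆ Icc (b - g) (b + g) ∩ Icc 0 1 := by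
  rintro y ⟨hlow, hhigh⟩
  rcases le_total (b - g) 0 with h | h
  · rw [max_eq_right h] at hlow hhigh
    exact ⟨⟨by linarith, by linarith [hb.1]⟩, by linarith, by linarith⟩
  · rw [max_eq_left h] at hlow hhigh
    exact ⟨⟨by linarith, by linarith⟩, by linarith, by linarith [hb.2]⟩

theorem ofReal_integral_le_volume_disc_inter_square {a b r : ℝ} (hb : b ∈ Icc (0 : ℝ) 1)
    (hr0 : 0 ≤ r) (hr1 : r ≤ 1) :
    ENNReal.ofReal (∫ t in 0..1, √(r ^ 2 - (t - a) ^ 2)) ≤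
      volume ({q : ℝ × ℝ | (q.1 - a) ^ 2 + (q.2 - b) ^ 2 ≤ r ^ 2} ∩ Icc 0 1 ×ˢ Icc 0 1) := by
  set g : ℝ → ℝ := fun t => √(r ^ 2 - (t - a) ^ 2)
  set low : ℝ → ℝ := fun t => max (b - g t) 0
  have hg : Continuous g := by fun_prop
  have hlow : Continuous low := by fun_prop
  have hg_le (t : ℝ) : g t ≤ 1 :=
    (sqrt_le_sqrt (by nlinarith : r ^ 2 - (t - a) ^ 2 ≤ r ^ 2)).trans
      ((sqrt_sq hr0).trans_le hr1)
  have hvol : volume (regionBetween low (low + g) (Ioo 0 1)) =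
      ENNReal.ofReal (∫ t in 0..1, g t) := by
    rw [Measure.volume_eq_prod, volume_regionBetween_eq_integral
      (hlow.integrableOn_Icc.mono_set Ioo_subset_Icc_self)
      ((hlow.add hg).integrableOn_Icc.mono_set Ioo_subset_Icc_self)
      measurableSet_Ioo fun t _ => by simp [g], integral_of_le zero_le_one,
      integral_Ioc_eq_integral_Ioo]
    simp
  rw [← hvol]
  refine measure_mono fun q ⟨hq1, hq2⟩ => ?_
  obtain ⟨⟨hb_le, hle_b⟩, hq2_mem⟩ := Ioo_max_sub_zero_subset hb (hg_le q.1) hq2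
  have hg_pos : 0 < g q.1 := by simpa using hq2.1.trans hq2.2
  have hg_sq : g q.1 ^ 2 = r ^ 2 - (q.1 - a) ^ 2 := sq_sqrt (sqrt_pos.1 hg_pos).le
  refine ⟨?_, ⟨hq1.1.le, hq1.2.le⟩, hq2_mem⟩
  show (q.1 - a) ^ 2 + (q.2 - b) ^ 2 ≤ r ^ 2
  nlinarith

def unitSquare : Set (EuclideanSpace ℝ (Fin 2)) := {p | ∀ k, p k ∈ Icc (0 : ℝ) 1}

theorem EuclideanSpace.measurePreserving_fin_two_coords :
    MeasurePreserving (fun y : EuclideanSpace ℝ (Fin 2) => (y 0, y 1)) :=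
  (volume_preserving_finTwoArrow ℝ).comp
    (EuclideanSpace.volume_preserving_symm_measurableEquiv_toLp (Fin 2))

theorem unitSquare_eq_preimage :
    unitSquare = (fun y : EuclideanSpace ℝ (Fin 2) => (y 0, y 1)) ⁻¹' (Icc 0 1 ×ˢ Icc 0 1) := by
  ext y
  simp only [unitSquare, Fin.forall_fin_two, mem_ofPred_eq, mem_preimage, mem_prod]

theorem EuclideanSpace.closedBall_fin_two_eq_preimage (x : EuclideanSpace ℝ (Fin 2)) {r : ℝ}
    (hr : 0 ≤ r) :
    Metric.closedBall x r = (fun y : EuclideanSpace ℝ (Fin 2) => (y 0, y 1)) ⁻¹'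
      {q : ℝ × ℝ | (q.1 - x 0) ^ 2 + (q.2 - x 1) ^ 2 ≤ r ^ 2} := by
  ext y
  simp [EuclideanSpace.dist_eq, Fin.sum_univ_two, Real.dist_eq, sq_abs, sqrt_le_left hr]

theorem measurableSet_unitSquare : MeasurableSet unitSquare := by
  rw [unitSquare_eq_preimage]
  exact EuclideanSpace.measurePreserving_fin_two_coords.measurable
    (measurableSet_Icc.prod measurableSet_Icc)

theorem volume_unitSquare : volume unitSquare = 1 := by
  rw [unitSquare_eq_preimage, EuclideanSpace.measurePreserving_fin_two_coords.measure_preimage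
    (measurableSet_Icc.prod measurableSet_Icc).nullMeasurableSet, Measure.volume_eq_prod,
    Measure.prod_prod]
  simp

instance isProbabilityMeasure_restrict_unitSquare :
    IsProbabilityMeasure (volume.restrict unitSquare) :=
  ⟨by rw [Measure.restrict_apply_univ, volume_unitSquare]⟩

theorem le_volume_closedBall_inter_unitSquare {x : EuclideanSpace ℝ (Fin 2)}
    (hx : x ∈ unitSquare) {r : ℝ} (hr0 : 0 ≤ r) (hr1 : r ≤ 1) :
    ENNReal.ofReal (π * r ^ 2 / 4) ≤ volume (Metric.closedBall x r ∩ unitSquare) := by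
  rw [EuclideanSpace.closedBall_fin_two_eq_preimage x hr0, unitSquare_eq_preimage,
    ← preimage_inter, EuclideanSpace.measurePreserving_fin_two_coords.measure_preimage
      ((measurableSet_le (by fun_prop) (by fun_prop)).inter
        (measurableSet_Icc.prod measurableSet_Icc)).nullMeasurableSet]
  exact (ENNReal.ofReal_le_ofReal
    (pi_mul_sq_div_four_le_integral_sqrt hr0 hr1 (hx 0).1 (hx 0).2)).trans
      (ofReal_integral_le_volume_disc_inter_square (hx 1) hr0 hr1)

section ClosePairs

variable {E : Type*} [NormedAddCommGroup E] [MeasurableSpace E] [BorelSpace E]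
  [SecondCountableTopology E]

def closePairs (r : ℝ) : Set (E × E) := {p | ‖p.1 - p.2‖ ≤ r}

theorem measurableSet_closePairs (r : ℝ) : MeasurableSet (closePairs (E := E) r) :=
  measurableSet_le (by fun_prop) measurable_const

theorem prod_closePairs_eq_lintegral (ν ν' : Measure E) [SFinite ν'] (r : ℝ) :
    (ν.prod ν') (closePairs r) = ∫⁻ x, ν' (Metric.closedBall x r) ∂ν := by
  rw [Measure.prod_apply (measurableSet_closePairs r)]
  congr with x
  congr with y
  simp [closePairs, dist_eq_norm, norm_sub_rev]

theorem integral_ite_norm_sub_le_of_indepFun {Ω : Type*} [MeasurableSpace Ω] {μ : Measure Ω}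
    [IsFiniteMeasure μ] {X Y : Ω → E} (hX : Measurable X) (hY : Measurable Y)
    (hXY : ProbabilityTheory.IndepFun X Y μ) {ν ν' : Measure E} (hXν : μ.map X = ν)
    (hYν : μ.map Y = ν') (r : ℝ) :
    ∫ ω, (if ‖X ω - Y ω‖ ≤ r then (1 : ℝ) else 0) ∂μ = (ν.prod ν').real (closePairs r) := by
  have hmap : μ.map (fun ω => (X ω, Y ω)) = ν.prod ν' := by
    rw [hXY.map_prod_eq_prod_map_map hX.aemeasurable hY.aemeasurable, hXν, hYν]
  rw [← hmap, ← integral_indicator_one (measurableSet_closePairs r),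
    integral_map (hX.prodMk hY).aemeasurable
      (measurable_one.indicator (measurableSet_closePairs r)).aestronglyMeasurable]
  rfl

theorem integral_sum_cut_ite_norm_sub_le {Ω ι : Type*} [MeasurableSpace Ω] {μ : Measure Ω}
    [IsProbabilityMeasure μ] [Fintype ι] [DecidableEq ι] {X : ι → Ω → E}
    (hX : ∀ i, Measurable (X i)) (hindep : ProbabilityTheory.iIndepFun X μ) {ν : Measure E}
    (hlaw : ∀ i, μ.map (X i) = ν) (A : Finset ι) (r : ℝ) :
    ∫ ω, ∑ i ∈ A, ∑ j ∈ Aᶜ, (if ‖X i ω - X j ω‖ ≤ r then (1 : ℝ) else 0) ∂μ =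
      A.card * Aᶜ.card * (ν.prod ν).real (closePairs r) := by
  have hint (i j : ι) : Integrable (fun ω => if ‖X i ω - X j ω‖ ≤ r then (1 : ℝ) else 0) μ :=
    (integrable_const (1 : ℝ)).indicator ((hX i).prodMk (hX j) (measurableSet_closePairs r))
  rw [integral_finsetSum _ fun i _ => integrable_finsetSum _ fun j _ => hint i j]
  calc _ = ∑ i ∈ A, ∑ j ∈ Aᶜ, (ν.prod ν).real (closePairs r) := by
        refine Finset.sum_congr rfl fun i hi => ?_
        rw [integral_finsetSum _ fun j _ => hint i j]
        refine Finset.sum_congr rfl fun j hj => integral_ite_norm_sub_le_of_indepFun (hX i) (hX j)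
          (hindep.indepFun ?_) (hlaw i) (hlaw j) r
        rintro rfl
        exact Finset.mem_compl.1 hj hi
    _ = _ := by simp [mul_assoc]

end ClosePairs

theorem measureReal_closePairs_unitSquare_le {r : ℝ} (hr : 0 ≤ r) :
    ((volume.restrict unitSquare).prod (volume.restrict unitSquare)).real (closePairs r) ≤
      π * r ^ 2 := by
  refine ENNReal.toReal_le_of_le_ofReal (by positivity) ?_
  rw [prod_closePairs_eq_lintegral]
  calc _ ≤ ∫⁻ x, volume (Metric.closedBall x r) ∂(volume.restrict unitSquare) :=
        lintegral_mono fun x => Measure.restrict_apply_le _ _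
    _ = ENNReal.ofReal (π * r ^ 2) := by
        simp only [EuclideanSpace.volume_closedBall_fin_two, lintegral_const, measure_univ,
          mul_one]
        rw [← ENNReal.ofReal_pow hr, ← ENNReal.ofReal_mul (by positivity), mul_comm]

theorem le_measureReal_closePairs_unitSquare {r : ℝ} (hr0 : 0 ≤ r) (hr1 : r ≤ 1) :
    π * r ^ 2 / 4 ≤
      ((volume.restrict unitSquare).prod (volume.restrict unitSquare)).real (closePairs r) := by
  refine (ENNReal.ofReal_le_iff_le_toReal (measure_ne_top _ _)).1 ?_
  rw [prod_closePairs_eq_lintegral]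
  calc ENNReal.ofReal (π * r ^ 2 / 4) =
        ∫⁻ _, ENNReal.ofReal (π * r ^ 2 / 4) ∂(volume.restrict unitSquare) := by simp
    _ ≤ _ := setLIntegral_mono' measurableSet_unitSquare fun x hx => by
        rw [Measure.restrict_apply' measurableSet_unitSquare]
        exact le_volume_closedBall_inter_unitSquare hx hr0 hr1

theorem fully_random_expected_cut_edges_general {Ω : Type*} [MeasurableSpace Ω]
    (μ : Measure Ω) [IsProbabilityMeasure μ] (n : ℕ)
    (r : ℝ) (hr0 : 0 < r) (hr1 : r ≤ 1)
    (X : Fin n → Ω → EuclideanSpace ℝ (Fin 2)) (hX : ∀ i, Measurable (X i))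
    (hindep : ProbabilityTheory.iIndepFun X μ)
    (hunif : ∀ i, Measure.map (X i) μ =
      volume.restrict {p : EuclideanSpace ℝ (Fin 2) | ∀ k, p k ∈ Set.Icc (0 : ℝ) 1})
    (A : Finset (Fin n)) (hA2 : (A.card : ℝ) ≤ n / 2) :
    (1 / 8) * A.card * n * π * r ^ 2 ≤
        (∫ ω, ∑ i ∈ A, ∑ j ∈ Aᶜ, (if ‖X i ω - X j ω‖ ≤ r then (1 : ℝ) else 0) ∂μ) ∧
      (∫ ω, ∑ i ∈ A, ∑ j ∈ Aᶜ, (if ‖X i ω - X j ω‖ ≤ r then (1 : ℝ) else 0) ∂μ) ≤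
        A.card * n * π * r ^ 2 := by
  have hlaw : ∀ i, μ.map (X i) = volume.restrict unitSquare := hunif
  rw [integral_sum_cut_ite_norm_sub_le hX hindep hlaw]
  have hcard : (A.card : ℝ) + Aᶜ.card = n := by
    exact_mod_cast (Finset.card_add_card_compl A).trans (Fintype.card_fin n)
  have hlow := le_measureReal_closePairs_unitSquare hr0.le hr1
  have hup := measureReal_closePairs_unitSquare_le hr0.le
  constructor
  · calc (1 / 8) * A.card * n * π * r ^ 2 = A.card * (n / 2) * (π * r ^ 2 / 4) := by ring
      _ ≤ _ := by gcongr; linarith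
  · calc _ ≤ A.card * n * (π * r ^ 2) := by
          gcongr
          exact Aᶜ.card_le_univ.trans_eq (Fintype.card_fin n)
      _ = _ := by ring

/-- Expected number of connecting edges after a fully random move: if `X 1, …, X n` are
independent uniform points on the unit square and `A` is a set of nodes with
`1 ≤ |A| ≤ n/2`, then the expected number `E[N]` of ordered pairs `(i, j)` with `i ∈ A`,
`j ∉ A` and `‖X i − X j‖ ≤ r` satisfies `(1/8)|A| n π r² ≤ E[N] ≤ |A| n π r²`. -/
theorem fully_random_expected_cut_edges {Ω : Type*} [MeasurableSpace Ω]
    (μ : Measure Ω) [IsProbabilityMeasure μ] (n : ℕ) (hn : 2 ≤ n)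
    (r : ℝ) (hr0 : 0 < r) (hr1 : r ≤ 1)
    (X : Fin n → Ω → EuclideanSpace ℝ (Fin 2)) (hX : ∀ i, Measurable (X i))
    (hindep : ProbabilityTheory.iIndepFun X μ)
    (hunif : ∀ i, Measure.map (X i) μ =
      volume.restrict {p : EuclideanSpace ℝ (Fin 2) | ∀ k, p k ∈ Set.Icc (0 : ℝ) 1})
    (A : Finset (Fin n)) (hA1 : 1 ≤ A.card) (hA2 : (A.card : ℝ) ≤ n / 2) :
    (1 / 8) * A.card * n * π * r ^ 2 ≤
        (∫ ω, ∑ i ∈ A, ∑ j ∈ Aᶜ, (if ‖X i ω - X j ω‖ ≤ r then (1 : ℝ) else 0) ∂μ) ∧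
      (∫ ω, ∑ i ∈ A, ∑ j ∈ Aᶜ, (if ‖X i ω - X j ω‖ ≤ r then (1 : ℝ) else 0) ∂μ) ≤
        A.card * n * π * r ^ 2 :=
  fully_random_expected_cut_edges_general μ n r hr0 hr1 X hX hindep hunif A hA2
end

section
/- For real numbers r > 0 and v > 0, define f(v, r) = (1/2) r + v²/(3r) if v ≤ r/2, and f(v, r) = − r³/(48 v²) + r²/(6v) + (2/3) v if v > r/2. Then for all r > 0 and v > 0, (1/4) max(v, r) ≤ f(v, r) ≤ max(v, r). -/
/-!
Above `v = r / 2` the conductance is `2v/3` plus the nonnegative correction `r²(8v - r)/(48v²)`,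
and below it is at least `r / 2`; either way it is at least a quarter of `max v r`. The upper
bound is elementary except for `r / 2 < v ≤ r`, where it reduces to
`48v²r - (32v³ + r²(8v - r)) = 32v²(r - v) + r(4v - r)² ≥ 0`.
-/

/-- The closed-form mobile conductance `f(v, r)` of the velocity constrained mobility
model (expression (8) of Theorem 3). -/
noncomputable def mobileConductanceVC (v r : ℝ) : ℝ :=
  if v ≤ r / 2 then (1 / 2) * r + v ^ 2 / (3 * r)
  else -(r ^ 3 / (48 * v ^ 2)) + r ^ 2 / (6 * v) + (2 / 3) * v

section

variable {r v : ℝ}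

theorem mobileConductanceVC_of_le_half (h : v ≤ r / 2) :
    mobileConductanceVC v r = r / 2 + v ^ 2 / (3 * r) := by
  rw [mobileConductanceVC, if_pos h]
  ring

theorem mobileConductanceVC_of_half_lt (hv : v ≠ 0) (h : r / 2 < v) :
    mobileConductanceVC v r = 2 / 3 * v + r ^ 2 * (8 * v - r) / (48 * v ^ 2) := by
  rw [mobileConductanceVC, if_neg h.not_ge]
  field_simp
  ring

theorem half_le_mobileConductanceVC_of_le_half (hr : 0 < r) (h : v ≤ r / 2) :
    r / 2 ≤ mobileConductanceVC v r := by
  rw [mobileConductanceVC_of_le_half h]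
  have : 0 ≤ v ^ 2 / (3 * r) := by positivity
  linarith

theorem two_thirds_mul_le_mobileConductanceVC_of_half_lt (hv : 0 < v) (h : r / 2 < v) :
    2 / 3 * v ≤ mobileConductanceVC v r := by
  rw [mobileConductanceVC_of_half_lt hv.ne' h]
  have : 0 ≤ r ^ 2 * (8 * v - r) / (48 * v ^ 2) :=
    div_nonneg (mul_nonneg (sq_nonneg r) (by linarith)) (by positivity)
  linarith

theorem mobileConductanceVC_le_right_of_le_half (hr : 0 < r) (hv : 0 ≤ v) (h : v ≤ r / 2) :
    mobileConductanceVC v r ≤ r := by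
  rw [mobileConductanceVC_of_le_half h]
  have : v ^ 2 / (3 * r) ≤ r / 12 := by
    rw [div_le_iff₀ (by positivity)]
    nlinarith
  linarith

theorem mobileConductanceVC_le_left_of_le (hr : 0 < r) (h : r ≤ v) :
    mobileConductanceVC v r ≤ v := by
  have hv : 0 < v := hr.trans_le h
  rw [mobileConductanceVC_of_half_lt hv.ne' (by linarith)]
  have : r ^ 2 * (8 * v - r) / (48 * v ^ 2) ≤ v / 3 := by
    rw [div_le_iff₀ (by positivity)]
    nlinarith [mul_le_mul h h hr.le hv.le, mul_pos hr hr]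
  linarith

theorem mobileConductanceVC_le_right_of_half_lt_of_le (hr : 0 < r) (h₁ : r / 2 < v)
    (h₂ : v ≤ r) : mobileConductanceVC v r ≤ r := by
  have hv : 0 < v := by linarith
  rw [mobileConductanceVC_of_half_lt hv.ne' h₁]
  have key : 48 * v ^ 2 * r - (32 * v ^ 3 + r ^ 2 * (8 * v - r))
      = 32 * v ^ 2 * (r - v) + r * (4 * v - r) ^ 2 := by ring
  have : r ^ 2 * (8 * v - r) / (48 * v ^ 2) ≤ r - 2 / 3 * v := by
    rw [div_le_iff₀ (by positivity)]
    linarith [key, mul_nonneg (sq_nonneg v) (sub_nonneg.2 h₂),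
      mul_nonneg hr.le (sq_nonneg (4 * v - r))]
  linarith

theorem quarter_mul_max_le_mobileConductanceVC (hr : 0 < r) (hv : 0 < v) :
    1 / 4 * max v r ≤ mobileConductanceVC v r := by
  rcases le_or_gt v (r / 2) with h | h
  · have := half_le_mobileConductanceVC_of_le_half hr h
    rw [max_eq_right (by linarith)]
    linarith
  · have := two_thirds_mul_le_mobileConductanceVC_of_half_lt hv h
    have : max v r ≤ 2 * v := max_le (by linarith) (by linarith)
    linarith

theorem mobileConductanceVC_le_max (hr : 0 < r) (hv : 0 < v) :
    mobileConductanceVC v r ≤ max v r := by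
  rcases le_or_gt v (r / 2) with h | h
  · exact (mobileConductanceVC_le_right_of_le_half hr hv.le h).trans (le_max_right v r)
  rcases le_total r v with h' | h'
  · exact (mobileConductanceVC_le_left_of_le hr h').trans (le_max_left v r)
  · exact (mobileConductanceVC_le_right_of_half_lt_of_le hr h h').trans (le_max_right v r)

end

/-- Theorem 3 made precise: for all `r > 0` and `v > 0`, the closed-form mobile
conductance satisfies `(1/4) max(v, r) ≤ f(v, r) ≤ max(v, r)`, i.e. it scales as
`Θ(max(v_max, r))`. -/
theorem mobile_conductance_velocity_bounds (r v : ℝ) (hr : 0 < r) (hv : 0 < v) :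
    (1 / 4) * max v r ≤ mobileConductanceVC v r ∧ mobileConductanceVC v r ≤ max v r :=
  ⟨quarter_mul_max_le_mobileConductanceVC hr hv, mobileConductanceVC_le_max hr hv⟩
end
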